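/- Let M(ℝ) be the Magnus algebra of formal power series in noncommuting variables X (a finite set), A ∈ X, and C : (−1,1) → M(ℝ) analytic with every coefficient series of C having valuation ≥ 1 (i.e., C(x) has zero constant term). Then there exists a unique analytic P : (−1,1) → M(ℝ) with P(0) = 1 such that G₊(x) = P(x)·x^A solves G'(x) = (A/x + C(x))·G(x) on (0,1); equivalently, x P'(x) + [P(x), A] = x C(x) P(x). -/

import Mathlib

open Filter Set FormalMultilinearSeries
open scoped Topology ENNReal NNReal

theorem const_of_hasDerivAt_zero {s : Set ℝ} (hs : Convex ℝ s) (ho : IsOpen s)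
    {f : ℝ → ℝ} (hf : ∀ x ∈ s, HasDerivAt f 0 x) {x y : ℝ} (hx : x ∈ s) (hy : y ∈ s) :
    f x = f y := by
  refine hs.is_const_of_fderivWithin_eq_zero
    (fun z hz => ((hf z hz).differentiableAt).differentiableWithinAt) (fun z hz => ?_) hx hy
  rw [fderivWithin_of_isOpen ho hz]
  have h1 : fderiv ℝ f z = ContinuousLinearMap.smulRight (1 : ℝ →L[ℝ] ℝ) (0:ℝ) :=
    (hf z hz).hasFDerivAt.fderiv
  rw [h1]
  ext
  simp

theorem analyticAt_dslope_zero {g : ℝ → ℝ} (hg : AnalyticAt ℝ g 0) :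
    AnalyticAt ℝ (dslope g 0) 0 := by
  obtain ⟨p, hp⟩ := hg
  exact hp.has_fpower_series_dslope_fslope.analyticAt

theorem analyticAt_dslope_ne {g : ℝ → ℝ} {x : ℝ} (hx : x ≠ 0) (hg : AnalyticAt ℝ g x) :
    AnalyticAt ℝ (dslope g 0) x := by
  have h1 : AnalyticAt ℝ (fun z => (g z - g 0) / (z - 0)) x := by
    exact (hg.sub analyticAt_const).div (analyticAt_id.sub analyticAt_const) (by simpa using hx)
  refine h1.congr ?_
  filter_upwards [eventually_ne_nhds hx] with z hz
  rw [dslope_of_ne _ hz, slope_def_field]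

set_option maxHeartbeats 1000000 in
theorem analyticAt_of_hasDerivAt {f g : ℝ → ℝ} {x₀ : ℝ} (hg : AnalyticAt ℝ g x₀)
    (hf : ∀ᶠ z in 𝓝 x₀, HasDerivAt f (g z) z) : AnalyticAt ℝ f x₀ := by
  obtain ⟨p, hp⟩ := hg
  obtain ⟨r, hr⟩ := hp
  set c : ℕ → ℝ := fun n => Nat.rec (f x₀) (fun m _ => p.coeff m / (m + 1)) n with hc
  have hcs : ∀ m : ℕ, c (m + 1) = p.coeff m / (m + 1) := fun m => rfl
  set q : FormalMultilinearSeries ℝ ℝ ℝ := FormalMultilinearSeries.ofScalars ℝ c with hqdef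
  obtain ⟨r', hr'pos, hr'lt⟩ : ∃ r' : ℝ≥0, 0 < r' ∧ (r' : ℝ≥0∞) < min r 1 := by
    have h : (0 : ℝ≥0∞) < min r 1 := lt_min hr.r_pos zero_lt_one
    rcases ENNReal.lt_iff_exists_nnreal_btwn.1 h with ⟨r', h1, h2⟩
    exact ⟨r', by simpa using h1, h2⟩
  have hr'r : (r' : ℝ≥0∞) < p.radius :=
    lt_of_lt_of_le (lt_of_lt_of_le hr'lt (min_le_left _ _)) hr.r_le
  have hr'1 : (r' : ℝ) ≤ 1 := by
    have := lt_of_lt_of_le hr'lt (min_le_right _ _)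
    exact_mod_cast this.le
  obtain ⟨Cb, hCbpos, hCb⟩ := p.norm_mul_pow_le_of_lt_radius hr'r
  have hqn : ∀ n, ‖q n‖ ≤ |c n| := by
    intro n
    have h1 : ‖q n‖ ≤ ‖c n‖ * ‖ContinuousMultilinearMap.mkPiAlgebraFin ℝ n ℝ‖ := by
      simp only [hqdef, FormalMultilinearSeries.ofScalars]
      exact norm_smul_le (c n) (ContinuousMultilinearMap.mkPiAlgebraFin ℝ n ℝ)
    have h2 : ‖ContinuousMultilinearMap.mkPiAlgebraFin ℝ n ℝ‖ ≤ 1 := by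
      cases n with
      | zero => simp [ContinuousMultilinearMap.norm_mkPiAlgebraFin_zero]
      | succ m => exact ContinuousMultilinearMap.norm_mkPiAlgebraFin_succ_le
    calc ‖q n‖ ≤ ‖c n‖ * ‖ContinuousMultilinearMap.mkPiAlgebraFin ℝ n ℝ‖ := h1
    _ ≤ |c n| * 1 := mul_le_mul_of_nonneg_left h2 (norm_nonneg _)
    _ = |c n| := mul_one _
  have hqrad : (r' : ℝ≥0∞) ≤ q.radius := by
    apply q.le_radius_of_bound (max |f x₀| Cb)
    intro n
    cases n with
    | zero =>
      simpa using le_trans (show ‖q 0‖ ≤ |f x₀| from hqn 0) (le_max_left _ _)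
    | succ m =>
      have h2 : |c (m+1)| ≤ ‖p m‖ := by
        rw [hcs m, abs_div, p.norm_apply_eq_norm_coef, Real.norm_eq_abs]
        apply div_le_self (abs_nonneg _)
        rw [abs_of_nonneg (by positivity)]
        simp
      have h3 : ‖p m‖ * (r':ℝ)^(m+1) ≤ Cb * 1 := by
        rw [pow_succ, ← mul_assoc]
        exact mul_le_mul (hCb m) hr'1 (by positivity) (le_of_lt hCbpos)
      calc ‖q (m+1)‖ * (r' : ℝ) ^ (m+1)
          ≤ |c (m+1)| * (r' : ℝ) ^ (m+1) :=
            mul_le_mul_of_nonneg_right (hqn _) (by positivity)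
        _ ≤ ‖p m‖ * (r':ℝ)^(m+1) := mul_le_mul_of_nonneg_right h2 (by positivity)
        _ ≤ Cb := by simpa using h3
        _ ≤ max |f x₀| Cb := le_max_right _ _
  have hq0 : (0 : ℝ≥0∞) < q.radius := lt_of_lt_of_le (by exact_mod_cast hr'pos) hqrad
  set F : ℝ → ℝ := fun z => q.sum (z - x₀) with hFdef
  have hQ : HasFPowerSeriesOnBall F q x₀ q.radius := by
    refine ⟨le_rfl, hq0, fun hy => ?_⟩
    simp only [hFdef]
    simpa using q.hasSum hy
  have hFanal : AnalyticAt ℝ F x₀ := hQ.analyticAt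
  have hFd : HasFPowerSeriesOnBall (fderiv ℝ F) q.derivSeries x₀ q.radius := hQ.fderiv
  rw [Metric.eventually_nhds_iff] at hf
  obtain ⟨ε₁, hε₁pos, hfball⟩ := hf
  obtain ⟨r₂, hr₂pos, hr₂lt⟩ : ∃ r₂ : ℝ≥0, 0 < r₂ ∧ (r₂ : ℝ≥0∞) < min r q.radius := by
    have h : (0 : ℝ≥0∞) < min r q.radius := lt_min hr.r_pos hq0
    rcases ENNReal.lt_iff_exists_nnreal_btwn.1 h with ⟨r₂, h1, h2⟩
    exact ⟨r₂, by simpa using h1, h2⟩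
  set ε : ℝ := min ε₁ r₂ with hεdef
  have hεpos : 0 < ε := lt_min hε₁pos (by exact_mod_cast hr₂pos)
  have hmem : ∀ y : ℝ, |y| < ε → ((↑‖y‖₊ : ℝ≥0∞) < r ∧ (↑‖y‖₊ : ℝ≥0∞) < q.radius) := by
    intro y hy
    have h1 : (↑‖y‖₊ : ℝ≥0∞) < r₂ := by
      rw [ENNReal.coe_lt_coe, ← NNReal.coe_lt_coe]
      have : |y| < (r₂ : ℝ) := lt_of_lt_of_le hy (min_le_right _ _)
      simpa [Real.norm_eq_abs] using this
    exact ⟨lt_of_lt_of_le h1 (le_of_lt (lt_of_lt_of_le hr₂lt (min_le_left _ _))),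
      lt_of_lt_of_le h1 (le_of_lt (lt_of_lt_of_le hr₂lt (min_le_right _ _)))⟩
  have key : ∀ z : ℝ, dist z x₀ < ε → z ≠ x₀ → deriv F z = g z := by
    intro z hz hzne
    set y := z - x₀ with hy
    have hzy : z = x₀ + y := by rw [hy]; ring
    have hyabs : |y| < ε := by rwa [Real.dist_eq] at hz
    have hy0 : y ≠ 0 := sub_ne_zero.2 hzne
    obtain ⟨hyr, hyq⟩ := hmem y hyabs
    have hyq' : y ∈ Metric.eball (0:ℝ) q.radius := by
      rwa [EMetric.mem_ball, edist_zero_right]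
    have hyr' : y ∈ Metric.eball (0:ℝ) r := by
      rwa [EMetric.mem_ball, edist_zero_right]
    have h1 := hFd.hasSum hyq'
    have h2 := (ContinuousLinearMap.apply ℝ ℝ (1:ℝ)).hasSum h1
    have h3 := hr.hasSum hyr'
    have hterm : (fun n => (ContinuousLinearMap.apply ℝ ℝ (1:ℝ)) (q.derivSeries n fun _ => y))
        = fun n => p n (fun _ => y) := by
      funext n
      rw [ContinuousLinearMap.apply_apply]
      have hdiag := q.derivSeries_apply_diag n y
      have hTy : (q.derivSeries n fun _ => y) y = y * (q.derivSeries n fun _ => y) 1 := by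
        have h := (q.derivSeries n fun _ => y).map_smul y (1:ℝ)
        simpa [smul_eq_mul] using h
      have h4 : q (n+1) (fun _ => y) = c (n+1) • y^(n+1) :=
        FormalMultilinearSeries.ofScalars_apply_eq c y (n+1)
      have h5 : p n (fun _ => y) = y ^ n • p.coeff n :=
        FormalMultilinearSeries.apply_eq_pow_smul_coeff
      have h6 : y * (q.derivSeries n fun _ => y) 1 = (n + 1 : ℕ) • (c (n+1) • y^(n+1)) := by
        rw [← hTy, hdiag, h4]
      have hn1 : ((n:ℝ)+1) ≠ 0 := by positivity
      have h8 : y * (q.derivSeries n fun _ => y) 1 = p.coeff n * y^(n+1) := by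
        rw [h6, hcs n, nsmul_eq_mul, smul_eq_mul]
        push_cast
        field_simp
      have h9 : (q.derivSeries n fun _ => y) 1 = p.coeff n * y^n := by
        apply mul_left_cancel₀ hy0
        rw [h8]; ring
      rw [h5, h9, smul_eq_mul]; ring
    rw [hterm] at h2
    have h10 : fderiv ℝ F (x₀ + y) 1 = g (x₀ + y) := h2.unique h3
    rw [hzy, ← fderiv_apply_one_eq_deriv, h10]
  have hcF : ContinuousAt (deriv F) x₀ := by
    have h := hFanal.fderiv.continuousAt
    have h2 : ContinuousAt (fun z => fderiv ℝ F z 1) x₀ :=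
      ((ContinuousLinearMap.apply ℝ ℝ (1:ℝ)).continuous.continuousAt).comp h
    have h3 : (fun z => fderiv ℝ F z 1) = deriv F := by
      funext z; exact fderiv_apply_one_eq_deriv
    rwa [h3] at h2
  have hat : deriv F x₀ = g x₀ := by
    have t1 : Tendsto (deriv F) (𝓝[≠] x₀) (𝓝 (deriv F x₀)) :=
      hcF.tendsto.mono_left nhdsWithin_le_nhds
    have t2 : Tendsto (deriv F) (𝓝[≠] x₀) (𝓝 (g x₀)) := by
      apply Tendsto.congr' _ ((hr.hasFPowerSeriesAt.analyticAt.continuousAt.tendsto).mono_left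
        nhdsWithin_le_nhds)
      have hev : ∀ᶠ z in 𝓝 x₀, dist z x₀ < ε :=
        Metric.eventually_nhds_iff.mpr ⟨ε, hεpos, fun {y} hy => hy⟩
      filter_upwards [hev.filter_mono nhdsWithin_le_nhds, self_mem_nhdsWithin] with z hz hzne
      exact (key z hz hzne).symm
    exact tendsto_nhds_unique t1 t2
  have hFhas : ∀ z, dist z x₀ < ε → HasDerivAt F (g z) z := by
    intro z hz
    have hzmem : (↑‖z - x₀‖₊ : ℝ≥0∞) < q.radius :=
      (hmem (z - x₀) (by rwa [Real.dist_eq] at hz)).2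
    have hzball : z ∈ Metric.eball x₀ q.radius := by
      rwa [EMetric.mem_ball, edist_eq_enorm_sub]
    have hdiff : DifferentiableAt ℝ F z :=
      (hQ.differentiableOn z hzball).differentiableAt (EMetric.isOpen_ball.mem_nhds hzball)
    have h := hdiff.hasDerivAt
    by_cases hzx : z = x₀
    · rwa [show deriv F z = g z by rw [hzx]; exact hat] at h
    · rwa [key z hz hzx] at h
  have hballd : ∀ z ∈ Metric.ball x₀ ε, HasDerivAt (fun w => f w - F w) 0 z := by
    intro z hz
    rw [Metric.mem_ball] at hz
    have h1 : HasDerivAt f (g z) z := hfball (lt_of_lt_of_le hz (min_le_left _ _))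
    have h2 := h1.sub (hFhas z hz); rwa [sub_self] at h2
  have hconst : ∀ z ∈ Metric.ball x₀ ε, f z - F z = f x₀ - F x₀ := fun z hz =>
    const_of_hasDerivAt_zero (convex_ball x₀ ε) Metric.isOpen_ball hballd hz
      (Metric.mem_ball_self hεpos)
  have hFanal' : AnalyticAt ℝ (fun z => F z + (f x₀ - F x₀)) x₀ := hFanal.add analyticAt_const
  refine hFanal'.congr ?_
  filter_upwards [Metric.ball_mem_nhds x₀ hεpos] with z hz
  have := hconst z hz
  linarith

noncomputable def magP {X : Type} [DecidableEq X] (A : X) (C : ℝ → List X → ℝ) :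
    List X → ℝ → ℝ
  | [] => fun _ => 1
  | b :: t => fun x => ∫ s in (0:ℝ)..x,
      ((∑ i ∈ Finset.range (b :: t).length,
          C s ((b :: t).take (i+1)) * magP A C ((b :: t).drop (i+1)) s)
        - dslope (fun u =>
            (if (b :: t).getLast? = some A then magP A C (b :: t).dropLast u else 0)
            - (if (b :: t).head? = some A then magP A C (b :: t).tail u else 0)) 0 s)
  termination_by w => w.length
  decreasing_by
    all_goals simp [List.length_dropLast]

noncomputable def magB {X : Type} [DecidableEq X] (A : X) (C : ℝ → List X → ℝ)
    (w : List X) : ℝ → ℝ := fun u =>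
  (if w.getLast? = some A then magP A C w.dropLast u else 0)
  - (if w.head? = some A then magP A C w.tail u else 0)

noncomputable def magS {X : Type} [DecidableEq X] (A : X) (C : ℝ → List X → ℝ)
    (w : List X) : ℝ → ℝ := fun s =>
  ∑ i ∈ Finset.range w.length, C s (w.take (i+1)) * magP A C (w.drop (i+1)) s

noncomputable def magF {X : Type} [DecidableEq X] (A : X) (C : ℝ → List X → ℝ)
    (w : List X) : ℝ → ℝ := fun s => magS A C w s - dslope (magB A C w) 0 s

theorem magP_nil {X : Type} [DecidableEq X] (A : X) (C : ℝ → List X → ℝ) :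
    magP A C ([] : List X) = fun _ => 1 := by
  funext x; rw [magP]

theorem magP_cons {X : Type} [DecidableEq X] (A : X) (C : ℝ → List X → ℝ) (b : X) (t : List X) :
    magP A C (b :: t) = fun x => ∫ s in (0:ℝ)..x, magF A C (b :: t) s := by
  funext x; rw [magP]
  rfl

theorem magP_zero {X : Type} [DecidableEq X] (A : X) (C : ℝ → List X → ℝ)
    (w : List X) (h : w ≠ []) : magP A C w 0 = 0 := by
  cases w with
  | nil => exact absurd rfl h
  | cons b t => rw [magP_cons]; simp

theorem magB_zero {X : Type} [DecidableEq X] (A : X) (C : ℝ → List X → ℝ)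
    (w : List X) : magB A C w 0 = 0 := by
  cases w with
  | nil => simp [magB]
  | cons b t =>
    cases t with
    | nil => simp [magB]
    | cons c t' =>
      have h1 : magP A C (b :: (c :: t').dropLast) 0 = 0 := magP_zero A C _ (by simp)
      have h2 : magP A C (c :: t') 0 = 0 := magP_zero A C _ (by simp)
      simp [magB, h1, h2]

section Part3
variable {X : Type} [DecidableEq X] (A : X) (C : ℝ → List X → ℝ)

theorem magF_anal (w : List X) (hw : w ≠ [])
    (hCanal : ∀ w : List X, ∀ x ∈ Set.Ioo (-1 : ℝ) 1, AnalyticAt ℝ (fun y => C y w) x)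
    (hshort : ∀ u : List X, u.length < w.length → ∀ z ∈ Set.Ioo (-1:ℝ) 1,
      AnalyticAt ℝ (magP A C u) z) :
    ∀ z ∈ Set.Ioo (-1:ℝ) 1, AnalyticAt ℝ (magF A C w) z := by
  have hwlen : 0 < w.length := List.length_pos_iff.mpr hw
  have hBanal : ∀ z ∈ Set.Ioo (-1:ℝ) 1, AnalyticAt ℝ (magB A C w) z := by
    intro z hz
    have hdl : AnalyticAt ℝ (magP A C w.dropLast) z :=
      hshort _ (by simp [List.length_dropLast]; omega) z hz
    have htl : AnalyticAt ℝ (magP A C w.tail) z :=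
      hshort _ (by simp [List.length_tail]; omega) z hz
    have hunf : magB A C w = fun u =>
        (if w.getLast? = some A then magP A C w.dropLast u else 0)
        - (if w.head? = some A then magP A C w.tail u else 0) := rfl
    rw [hunf]
    by_cases h1 : w.getLast? = some A <;> by_cases h2 : w.head? = some A <;>
      simp only [h1, h2, if_true, if_false]
    · exact hdl.sub htl
    · simp only [sub_zero]; exact hdl
    · simp only [zero_sub]; exact htl.neg
    · simp only [sub_zero]; exact analyticAt_const
  have hdsl : ∀ z ∈ Set.Ioo (-1:ℝ) 1, AnalyticAt ℝ (dslope (magB A C w) 0) z := by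
    intro z hz
    rcases eq_or_ne z 0 with rfl | hz0
    · exact analyticAt_dslope_zero (hBanal 0 (by norm_num))
    · exact analyticAt_dslope_ne hz0 (hBanal z hz)
  intro z hz
  have hsum : AnalyticAt ℝ (magS A C w) z := by
    apply Finset.analyticAt_fun_sum
    intro i _
    exact (hCanal _ z hz).mul (hshort _ (by simp [List.length_drop]; omega) z hz)
  exact hsum.sub (hdsl z hz)

theorem magF_derivAt (w : List X) (hw : w ≠ [])
    (hFanal : ∀ z ∈ Set.Ioo (-1:ℝ) 1, AnalyticAt ℝ (magF A C w) z) :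
    ∀ z ∈ Set.Ioo (-1:ℝ) 1, HasDerivAt (magP A C w) (magF A C w z) z := by
  intro z hz
  have hFcont : ContinuousOn (magF A C w) (Set.Ioo (-1:ℝ) 1) :=
    fun u hu => ((hFanal u hu).continuousAt).continuousWithinAt
  have hsub : Set.uIcc (0:ℝ) z ⊆ Set.Ioo (-1:ℝ) 1 := by
    intro u hu
    rw [Set.mem_uIcc] at hu
    obtain ⟨hz1, hz2⟩ := hz
    constructor <;> rcases hu with ⟨h1, h2⟩ | ⟨h1, h2⟩ <;> linarith
  have hint : IntervalIntegrable (magF A C w) MeasureTheory.volume 0 z :=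
    (hFcont.mono hsub).intervalIntegrable
  have hmeas := hFcont.stronglyMeasurableAtFilter (μ := MeasureTheory.volume) isOpen_Ioo z hz
  have hca : ContinuousAt (magF A C w) z := (hFanal z hz).continuousAt
  have h := intervalIntegral.integral_hasDerivAt_right hint hmeas hca
  cases w with
  | nil => exact absurd rfl hw
  | cons b t => rw [magP_cons]; exact h

theorem magP_anal
    (hCanal : ∀ w : List X, ∀ x ∈ Set.Ioo (-1 : ℝ) 1, AnalyticAt ℝ (fun y => C y w) x) :
    ∀ w : List X, ∀ x ∈ Set.Ioo (-1:ℝ) 1, AnalyticAt ℝ (magP A C w) x := by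
  have main : ∀ n : ℕ, ∀ w : List X, w.length ≤ n →
      ∀ x ∈ Set.Ioo (-1:ℝ) 1, AnalyticAt ℝ (magP A C w) x := by
    intro n
    induction n with
    | zero =>
      intro w hw x hx
      have : w = [] := List.length_eq_zero_iff.mp (Nat.le_zero.mp hw)
      subst this
      rw [magP_nil]
      exact analyticAt_const
    | succ n ih =>
      intro w hw x hx
      rcases eq_or_ne w [] with rfl | hne
      · rw [magP_nil]; exact analyticAt_const
      · have hshort : ∀ u : List X, u.length < w.length → ∀ z ∈ Set.Ioo (-1:ℝ) 1,
            AnalyticAt ℝ (magP A C u) z := by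
          intro u hu z hz
          exact ih u (by omega) z hz
        have hFanal := magF_anal A C w hne hCanal hshort
        apply analyticAt_of_hasDerivAt (hFanal x hx)
        filter_upwards [isOpen_Ioo.mem_nhds hx] with z hz
        exact magF_derivAt A C w hne hFanal z hz
  exact fun w => main w.length w le_rfl

theorem magP_ode
    (hCanal : ∀ w : List X, ∀ x ∈ Set.Ioo (-1 : ℝ) 1, AnalyticAt ℝ (fun y => C y w) x)
    (hC0 : ∀ x ∈ Set.Ioo (-1 : ℝ) 1, C x [] = 0) :
    ∀ x ∈ Set.Ioo (-1:ℝ) 1, ∀ w : List X,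
      x * deriv (magP A C w) x + magB A C w x
        = x * ∑ i ∈ Finset.range (w.length + 1), C x (w.take i) * magP A C (w.drop i) x := by
  intro x hx w
  rcases eq_or_ne w [] with rfl | hne
  · simp [magP_nil, magB, hC0 x hx]
  · have hshort : ∀ u : List X, u.length < w.length → ∀ z ∈ Set.Ioo (-1:ℝ) 1,
        AnalyticAt ℝ (magP A C u) z := fun u _ z hz => magP_anal A C hCanal u z hz
    have hFanal := magF_anal A C w hne hCanal hshort
    have hd : deriv (magP A C w) x = magF A C w x :=
      (magF_derivAt A C w hne hFanal x hx).deriv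
    rw [hd]
    have hrhs : ∑ i ∈ Finset.range (w.length + 1), C x (w.take i) * magP A C (w.drop i) x
        = magS A C w x := by
      rw [Finset.sum_range_succ']
      simp only [List.take_zero, List.drop_zero]
      rw [hC0 x hx]
      simp [magS]
    rw [hrhs]
    simp only [magF]
    rcases eq_or_ne x 0 with rfl | hx0
    · simp [magB_zero]
    · have hds : dslope (magB A C w) 0 x = magB A C w x / x := by
        rw [dslope_of_ne _ hx0, slope_def_field, magB_zero, sub_zero, sub_zero]
      rw [hds]
      field_simp
      ring
end Part3


/-- An analytic family `P : (−1,1) → M(ℝ)` (coefficients indexed by words `List X`)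
is a Magnus solution for the letter `A` and the family `C` if `P(0) = 1` and
`x P'(x) + [P(x), A] = x C(x) P(x)` holds coefficientwise on `(−1,1)`
(so that `G₊(x) = P(x) xᴬ` solves `G' = (A/x + C(x)) G` on `(0,1)`). -/
def IsMagnusSolution {X : Type} [DecidableEq X] (A : X)
    (C P : ℝ → List X → ℝ) : Prop :=
  (∀ w : List X, ∀ x ∈ Set.Ioo (-1 : ℝ) 1, AnalyticAt ℝ (fun y => P y w) x) ∧
  P 0 [] = 1 ∧ (∀ w : List X, w ≠ [] → P 0 w = 0) ∧
  ∀ x ∈ Set.Ioo (-1 : ℝ) 1, ∀ w : List X,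
    x * deriv (fun y => P y w) x
      + ((if w.getLast? = some A then P x w.dropLast else 0)
          - (if w.head? = some A then P x w.tail else 0))
      = x * ∑ i ∈ Finset.range (w.length + 1), C x (w.take i) * P x (w.drop i)

theorem magP_unique {X : Type} [DecidableEq X] (A : X) (C : ℝ → List X → ℝ)
    (hCanal : ∀ w : List X, ∀ x ∈ Set.Ioo (-1 : ℝ) 1, AnalyticAt ℝ (fun y => C y w) x)
    (hC0 : ∀ x ∈ Set.Ioo (-1 : ℝ) 1, C x [] = 0)
    (Q : ℝ → List X → ℝ) (hQ : IsMagnusSolution A C Q) :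
    ∀ n : ℕ, ∀ w : List X, w.length ≤ n → ∀ x ∈ Set.Ioo (-1:ℝ) 1,
      Q x w = magP A C w x := by
  obtain ⟨hQanal, hQ1, hQ0, hQode⟩ := hQ
  intro n
  induction n using Nat.strong_induction_on with
  | _ n ih =>
  intro w hw x hx
  have h0I : (0:ℝ) ∈ Set.Ioo (-1:ℝ) 1 := by norm_num
  have hPanal := magP_anal A C hCanal w
  set D : ℝ → ℝ := fun y => Q y w - magP A C w y with hD
  have hDanal : ∀ z ∈ Set.Ioo (-1:ℝ) 1, AnalyticAt ℝ D z := fun z hz =>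
    (hQanal w z hz).sub (hPanal z hz)
  have hD0 : D 0 = 0 := by
    rcases eq_or_ne w [] with rfl | hne
    · simp [hD, hQ1, magP_nil]
    · simp [hD, hQ0 w hne, magP_zero A C w hne]
  have hDder : ∀ z ∈ Set.Ioo (-1:ℝ) 1, z ≠ 0 → deriv D z = 0 := by
    intro z hz hz0
    have e1 := hQode z hz w
    have e2 := magP_ode A C hCanal hC0 z hz w
    have hbr : ((if w.getLast? = some A then Q z w.dropLast else 0)
        - (if w.head? = some A then Q z w.tail else 0)) = magB A C w z := by
      rcases eq_or_ne w [] with rfl | hne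
      · simp [magB]
      · have hwpos : 0 < w.length := List.length_pos_iff.mpr hne
        have hdl : Q z w.dropLast = magP A C w.dropLast z :=
          ih w.dropLast.length (by simp [List.length_dropLast]; omega) _ le_rfl z hz
        have htl : Q z w.tail = magP A C w.tail z :=
          ih w.tail.length (by simp [List.length_tail]; omega) _ le_rfl z hz
        simp only [magB, hdl, htl]
    have hsum : (∑ i ∈ Finset.range (w.length+1), C z (w.take i) * Q z (w.drop i))
        = ∑ i ∈ Finset.range (w.length+1), C z (w.take i) * magP A C (w.drop i) z := by
      refine Finset.sum_congr rfl fun i hi => ?_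
      rcases Nat.eq_zero_or_pos i with rfl | hipos
      · simp [hC0 z hz]
      · rw [Finset.mem_range] at hi
        have hlen : (w.drop i).length < n := by
          simp only [List.length_drop]
          omega
        rw [ih _ hlen _ le_rfl z hz]
    have hQd : DifferentiableAt ℝ (fun y => Q y w) z := (hQanal w z hz).differentiableAt
    have hPd : DifferentiableAt ℝ (magP A C w) z := (hPanal z hz).differentiableAt
    have hDd : deriv D z = deriv (fun y => Q y w) z - deriv (magP A C w) z := by
      rw [hD]
      exact deriv_sub hQd hPd
    have heq : z * deriv (fun y => Q y w) z = z * deriv (magP A C w) z := by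
      rw [hbr, hsum] at e1
      linarith [e1, e2]
    have hde : deriv (fun y => Q y w) z = deriv (magP A C w) z := mul_left_cancel₀ hz0 heq
    rw [hDd, hde, sub_self]
  have hDder0 : deriv D 0 = 0 := by
    have hAnhd : AnalyticOnNhd ℝ D (Set.Ioo (-1:ℝ) 1) := fun z hz => hDanal z hz
    have hda : AnalyticAt ℝ (deriv D) 0 := hAnhd.deriv 0 h0I
    have t1 : Filter.Tendsto (deriv D) (𝓝[≠] (0:ℝ)) (𝓝 (deriv D 0)) :=
      hda.continuousAt.tendsto.mono_left nhdsWithin_le_nhds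
    have t2 : Filter.Tendsto (deriv D) (𝓝[≠] (0:ℝ)) (𝓝 0) := by
      refine Filter.Tendsto.congr' ?_ tendsto_const_nhds
      filter_upwards [mem_nhdsWithin_of_mem_nhds (isOpen_Ioo.mem_nhds h0I),
        self_mem_nhdsWithin] with z hzI hzne
      exact (hDder z hzI hzne).symm
    exact tendsto_nhds_unique t1 t2
  have hhas : ∀ z ∈ Set.Ioo (-1:ℝ) 1, HasDerivAt D 0 z := by
    intro z hz
    have hd := (hDanal z hz).differentiableAt.hasDerivAt
    rcases eq_or_ne z 0 with rfl | hz0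
    · rwa [hDder0] at hd
    · rwa [hDder z hz hz0] at hd
  have hcst := const_of_hasDerivAt_zero (convex_Ioo (-1:ℝ) 1) isOpen_Ioo hhas hx h0I
  have hDx : D x = 0 := hcst.trans hD0
  have hfin : Q x w - magP A C w x = 0 := hDx
  linarith

/-- In the Magnus algebra `M(ℝ)` over a finite alphabet `X`, for a letter
`A ∈ X` and an analytic `C : (−1,1) → M(ℝ)` with zero constant term, there is a unique
analytic `P : (−1,1) → M(ℝ)` with `P(0) = 1` such that `G₊(x) = P(x) xᴬ` solves
`G' = (A/x + C(x)) G` on `(0,1)`, i.e. `x P'(x) + [P(x),A] = x C(x) P(x)`. -/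
theorem stmt18 (X : Type) [Fintype X] [DecidableEq X] (A : X)
    (C : ℝ → List X → ℝ)
    (hCanal : ∀ w : List X, ∀ x ∈ Set.Ioo (-1 : ℝ) 1, AnalyticAt ℝ (fun y => C y w) x)
    (hC0 : ∀ x ∈ Set.Ioo (-1 : ℝ) 1, C x [] = 0) :
    ∃ P : ℝ → List X → ℝ, IsMagnusSolution A C P ∧
      ∀ Q : ℝ → List X → ℝ, IsMagnusSolution A C Q →
        ∀ x ∈ Set.Ioo (-1 : ℝ) 1, ∀ w : List X, Q x w = P x w := by
  refine ⟨fun y w => magP A C w y, ⟨?_, ?_, ?_, ?_⟩, ?_⟩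
  · intro w x hx
    exact magP_anal A C hCanal w x hx
  · show magP A C [] 0 = 1
    rw [magP_nil]
  · intro w hw
    exact magP_zero A C w hw
  · intro x hx w
    have h := magP_ode A C hCanal hC0 x hx w
    simp only [magB] at h
    exact h
  · intro Q hQsol x hx w
    exact magP_unique A C hCanal hC0 Q hQsol w.length w le_rfl x hx
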